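/- Let 0 < β < 4 and suppose u is a C² solution of u'' = (e^u − 1)/√(1 − (β/4)(e^u − 1)²) on ℝ with u(−∞) = 0 and u(∞) = −∞. Then u(x) < 0 for all x ∈ ℝ. -/

import Mathlib

/-!
Write `D = 1 - β/4 (eᵘ - 1)²`. On `{D > 0}` the equation reads `√D · u'' = eᵘ - 1`; both sides are
continuous, so at a boundary point of `{D > 0}` we would get `eᵘ = 1`, i.e. `D = 1`. Hence `D > 0`
everywhere and `u''` has the sign of `u`, which rules out a positive maximum: `u ≤ 0`. A zero of `u`
is then a maximum, so `u = u' = 0` there; since `|u''| ≤ |u| / √(1 - β/4)` when `u ≤ 0`, Grönwall's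
inequality for `(u, u')` gives `u ≡ 0`, contradicting `u(∞) = -∞`.
-/

open Filter Set Topology Real

theorem forall_pos_of_eq_div_sqrt {X : Type*} [TopologicalSpace X] [PreconnectedSpace X]
    {g h D : X → ℝ} (hg : Continuous g) (hh : Continuous h) (hD : Continuous D)
    (heq : ∀ x, h x = g x / √(D x)) (hgD : ∀ x, D x = 0 → g x ≠ 0) (hne : ∃ x, 0 < D x) :
    ∀ x, 0 < D x := by
  set S := {x | 0 < D x}
  have hclosed : IsClosed S := by
    refine isClosed_of_closure_subset fun x hx => ?_
    have hmul : closure S ⊆ {x | √(D x) * h x = g x} :=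
      closure_minimal (fun y (hy : 0 < D y) => show √(D y) * h y = g y by
          rw [heq, mul_div_cancel₀ _ (sqrt_pos.mpr hy).ne'])
        (isClosed_eq (by fun_prop) hg)
    have hnonneg : 0 ≤ D x :=
      closure_minimal (fun y (hy : 0 < D y) => hy.le) (isClosed_le continuous_const hD) hx
    refine hnonneg.lt_of_ne fun hzero => hgD x hzero.symm ?_
    have := hmul hx
    simp only [mem_ofPred_eq, ← hzero, sqrt_zero, zero_mul] at this
    exact this.symm
  have huniv := IsClopen.eq_univ ⟨hclosed, isOpen_lt continuous_const hD⟩ hne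
  exact fun x => (huniv ▸ mem_univ x : x ∈ S)

theorem IsLocalMax.deriv_deriv_nonpos {f : ℝ → ℝ} {c : ℝ} (h : IsLocalMax f c)
    (hf : ContinuousAt f c) : deriv (deriv f) c ≤ 0 := by
  by_contra! hpos
  have hmin := isLocalMin_of_deriv_deriv_pos hpos h.deriv_eq_zero hf
  have hconst : f =ᶠ[𝓝 c] fun _ => f c := by
    filter_upwards [h, hmin] with y hmax hmin using le_antisymm hmax hmin
  exact hpos.ne' (by rw [hconst.deriv.deriv_eq]; simp)

theorem exists_forall_le_of_tendsto_atBot_atTop {u : ℝ → ℝ} {a x₀ : ℝ} (hu : Continuous u)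
    (hbot : Tendsto u atBot (𝓝 a)) (htop : Tendsto u atTop atBot) (hx₀ : a < u x₀) :
    ∃ c, ∀ y, u y ≤ u c := by
  refine hu.exists_forall_ge' x₀ ?_
  rw [cocompact_eq_atBot_atTop, eventually_sup]
  exact ⟨(hbot.eventually (gt_mem_nhds hx₀)).mono fun _ => le_of_lt,
    htop.eventually (eventually_le_atBot _)⟩

theorem nonpos_of_deriv_deriv_pos {u : ℝ → ℝ} (hu : Continuous u)
    (hbot : Tendsto u atBot (𝓝 0)) (htop : Tendsto u atTop atBot)
    (hpos : ∀ x, 0 < u x → 0 < deriv (deriv u) x) : ∀ x, u x ≤ 0 := by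
  intro x₀
  by_contra! hx₀
  obtain ⟨c, hc⟩ := exists_forall_le_of_tendsto_atBot_atTop hu hbot htop hx₀
  have hmax : IsLocalMax u c := Eventually.of_forall hc
  exact (hpos c (hx₀.trans_le (hc x₀))).not_ge (hmax.deriv_deriv_nonpos hu.continuousAt)

theorem eq_zero_of_norm_deriv_le_mul_norm {E : Type*} [NormedAddCommGroup E] [NormedSpace ℝ E]
    {F F' : ℝ → E} {K x : ℝ} (hF : ∀ t, HasDerivAt F (F' t) t)
    (bound : ∀ t, ‖F' t‖ ≤ K * ‖F t‖) (hx : F x = 0) : ∀ t, F t = 0 := by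
  intro t
  rcases le_total x t with hxt | htx
  · exact eq_zero_of_abs_deriv_le_mul_abs_self_of_eq_zero_right
      (fun s _ => (hF s).continuousAt.continuousWithinAt)
      (fun s _ => (hF s).hasDerivWithinAt) hx (fun s _ => bound s) t ⟨hxt, le_rfl⟩
  · have hrev : ∀ s, HasDerivAt (fun s => F (-s)) (-F' (-s)) s := fun s => by
      have := (hF (-s)).scomp s (hasDerivAt_neg s)
      rwa [neg_one_smul] at this
    have := eq_zero_of_abs_deriv_le_mul_abs_self_of_eq_zero_right
      (fun s _ => (hrev s).continuousAt.continuousWithinAt)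
      (fun s _ => (hrev s).hasDerivWithinAt) (by simpa using hx)
      (fun s _ => by simpa using bound (-s)) (-t) ⟨neg_le_neg htx, le_rfl⟩
    simpa using this

theorem eq_zero_of_abs_deriv_deriv_le {u : ℝ → ℝ} {M x : ℝ} (hu : Differentiable ℝ u)
    (hu' : Differentiable ℝ (deriv u)) (bound : ∀ t, |deriv (deriv u) t| ≤ M * |u t|)
    (h₀ : u x = 0) (h₁ : deriv u x = 0) : ∀ t, u t = 0 := by
  have hF : ∀ t, HasDerivAt (fun t => (u t, deriv u t)) (deriv u t, deriv (deriv u) t) t :=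
    fun t => (hu t).hasDerivAt.prodMk (hu' t).hasDerivAt
  have hbound : ∀ t, ‖(deriv u t, deriv (deriv u) t)‖ ≤ max 1 M * ‖(u t, deriv u t)‖ := by
    intro t
    simp only [Prod.norm_def, Real.norm_eq_abs]
    have hK : 0 ≤ max 1 M := zero_le_one.trans (le_max_left 1 M)
    refine max_le ?_ ?_
    · calc |deriv u t| = 1 * |deriv u t| := (one_mul _).symm
        _ ≤ max 1 M * max |u t| |deriv u t| :=
          mul_le_mul (le_max_left 1 M) (le_max_right _ _) (abs_nonneg _) hK
    · calc |deriv (deriv u) t| ≤ M * |u t| := bound t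
        _ ≤ max 1 M * max |u t| |deriv u t| :=
          mul_le_mul (le_max_right 1 M) (le_max_left _ _) (abs_nonneg _) hK
  have hzero := eq_zero_of_norm_deriv_le_mul_norm (x := x) hF hbound (by simp [h₀, h₁])
  exact fun t => congrArg Prod.fst (hzero t)

theorem sq_exp_sub_one_le_one {v : ℝ} (hv : v ≤ 0) : (exp v - 1) ^ 2 ≤ 1 := by
  have := exp_pos v
  have := exp_le_one_iff.mpr hv
  nlinarith

theorem one_sub_div_four_le_one_sub_mul_sq_exp_sub_one {β v : ℝ} (hβ : 0 ≤ β) (hv : v ≤ 0) :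
    1 - β / 4 ≤ 1 - β / 4 * (exp v - 1) ^ 2 := by
  nlinarith [sq_exp_sub_one_le_one hv]

theorem abs_exp_sub_one_div_sqrt_le {β v : ℝ} (hβ0 : 0 ≤ β) (hβ4 : β < 4) (hv : v ≤ 0) :
    |(exp v - 1) / √(1 - β / 4 * (exp v - 1) ^ 2)| ≤ (√(1 - β / 4))⁻¹ * |v| := by
  have hd : 0 < √(1 - β / 4) := sqrt_pos.mpr (by linarith)
  have hnum : |exp v - 1| ≤ |v| := by
    rw [abs_of_nonpos (by linarith [exp_le_one_iff.mpr hv]), abs_of_nonpos hv]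
    linarith [add_one_le_exp v]
  have hden : √(1 - β / 4) ≤ √(1 - β / 4 * (exp v - 1) ^ 2) :=
    sqrt_le_sqrt (one_sub_div_four_le_one_sub_mul_sq_exp_sub_one hβ0 hv)
  rw [abs_div, abs_of_pos (hd.trans_le hden), inv_mul_eq_div]
  exact div_le_div₀ (abs_nonneg _) hnum hd hden

theorem stmt_15 (β : ℝ) (hβ0 : 0 < β) (hβ4 : β < 4) (u : ℝ → ℝ)
    (hu : ContDiff ℝ 2 u)
    (hode : ∀ x, deriv (deriv u) x =
      (Real.exp (u x) - 1) / Real.sqrt (1 - β / 4 * (Real.exp (u x) - 1) ^ 2))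
    (hbot : Filter.Tendsto u Filter.atBot (nhds 0))
    (htop : Filter.Tendsto u Filter.atTop Filter.atBot) :
    ∀ x, u x < 0 := by
  have hu' : ContDiff ℝ 1 (deriv u) := (contDiff_succ_iff_deriv (n := 1)).mp hu |>.2.2
  obtain ⟨z, hz⟩ := (htop.eventually (eventually_lt_atBot 0)).exists
  have hD : ∀ x, 0 < 1 - β / 4 * (exp (u x) - 1) ^ 2 :=
    forall_pos_of_eq_div_sqrt (by fun_prop) (hu'.continuous_deriv le_rfl) (by fun_prop) hode
      (fun x hx hg => by simp [hg] at hx)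
      ⟨z, by linarith [one_sub_div_four_le_one_sub_mul_sq_exp_sub_one hβ0.le hz.le]⟩
  have hle : ∀ x, u x ≤ 0 := nonpos_of_deriv_deriv_pos hu.continuous hbot htop fun x hx => by
    rw [hode]
    exact div_pos (by linarith [add_one_le_exp (u x)]) (sqrt_pos.mpr (hD x))
  intro x
  refine (hle x).lt_of_ne fun hx => ?_
  have hmax : IsLocalMax u x := Eventually.of_forall fun y => hx ▸ hle y
  have hzero := eq_zero_of_abs_deriv_deriv_le (hu.differentiable (by norm_num))
    (hu'.differentiable one_ne_zero)
    (fun t => hode t ▸ abs_exp_sub_one_div_sqrt_le hβ0.le hβ4 (hle t)) hx hmax.deriv_eq_zero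
  exact hz.ne (hzero z)
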